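/- arXiv:2210.15223 — 2 statements merged into one kernel-verified Lean document; each statement's English description precedes it below -/
import Mathlib

section
/- If A is an atom of a C_n lattice 𝓛 of rank at least 3, then A* is also an atom of 𝓛. -/
/-!
Distinct atoms are disjoint and cover `E`. In rank at least three no atom is covered by `E`,
and then an atom `Q` meeting `P*`, for an atom `P`, lies inside `P*`: a cover of `P` containing
`Q` would not be admissible. Applied to `A` and to an atom `B` through a point of `A*`, this
gives `B ⊆ A*` and `A ⊆ B*`, so `A* = B`.
-/

open Finset

variable {α : Type*} [DecidableEq α] [Fintype α]

/-- `B` covers `A` in the family `L` of subsets ordered by inclusion. -/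
def CovIn (L : Set (Finset α)) (A B : Finset α) : Prop :=
  A ∈ L ∧ B ∈ L ∧ A ⊂ B ∧ ∀ C ∈ L, A ⊆ C → C ⊆ B → C = A ∨ C = B

/-- An atom of the family `L`: an element covering the least element `∅`. -/
def IsAtomIn (L : Set (Finset α)) (A : Finset α) : Prop := CovIn L ∅ A

/-- A `C_n` lattice on ground set `E` with (fixed-point-free) involution `star`. -/
structure IsCnLattice (star : α → α) (E : Finset α) (L : Set (Finset α)) : Prop where
  star_invol : Function.Involutive star
  star_ne : ∀ x, star x ≠ x
  star_mem : ∀ x ∈ E, star x ∈ E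
  subset_ground : ∀ A ∈ L, A ⊆ E
  empty_mem : (∅ : Finset α) ∈ L
  ground_mem : E ∈ L
  admissible : ∀ A ∈ L, A ≠ E → A ∩ A.image star = ∅
  inter_mem : ∀ A ∈ L, ∀ B ∈ L, A ∩ B ∈ L
  covers_inter : ∀ A ∈ L, ¬ CovIn L A E →
    ∀ B C, CovIn L A B → CovIn L A C → B ≠ C → B ∩ C = A
  covers_union : ∀ A ∈ L, ¬ CovIn L A E →
    ∀ x, x ∈ E \ A.image star ↔ ∃ B, CovIn L A B ∧ x ∈ B

/-- A maximal chain from `A` to `B` in `L`: a list of successive covers starting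
at `A` and ending at `B`. -/
def IsMaxChainIn (L : Set (Finset α)) (A B : Finset α) (c : List (Finset α)) : Prop :=
  c.Chain' (CovIn L) ∧ c.head? = some A ∧ c.getLast? = some B

section

variable {β : Type*} {L : Set (Finset β)} {A B C P : Finset β}

theorem CovIn.right_mem (h : CovIn L A B) : B ∈ L := h.2.1

theorem CovIn.ssubset (h : CovIn L A B) : A ⊂ B := h.2.2.1

theorem CovIn.eq_or_eq (h : CovIn L A B) (hC : C ∈ L) (hAC : A ⊆ C) (hCB : C ⊆ B) :
    C = A ∨ C = B :=
  h.2.2.2 C hC hAC hCB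

theorem not_covIn_of_ssubset_of_ssubset (hC : C ∈ L) (hAC : A ⊂ C) (hCB : C ⊂ B) :
    ¬ CovIn L A B := fun h =>
  (h.eq_or_eq hC hAC.subset hCB.subset).elim hAC.ne' hCB.ne

theorem IsAtomIn.nonempty (hP : IsAtomIn L P) : P.Nonempty :=
  nonempty_iff_ne_empty.mpr hP.ssubset.ne'

theorem IsMaxChainIn.exists_isAtomIn_covIn_ssubset {E : Finset β} {c : List (Finset β)}
    (hsub : ∀ A ∈ L, A ⊆ E) (hc : IsMaxChainIn L ∅ E c) (hlen : 4 ≤ c.length) :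
    ∃ b d, IsAtomIn L b ∧ CovIn L b d ∧ d ⊂ E := by
  obtain ⟨hchain, hhead, -⟩ := hc
  rcases c with - | ⟨c₀, - | ⟨b, - | ⟨d, - | ⟨e, rest⟩⟩⟩⟩ <;> simp at hlen
  obtain rfl : c₀ = ∅ := by simpa using hhead
  replace hchain : List.IsChain (CovIn L) (∅ :: b :: d :: e :: rest) := hchain
  obtain ⟨hb, hbd, hde, -⟩ := by simpa only [List.isChain_cons_cons] using hchain
  exact ⟨b, d, hb, hbd, hde.ssubset.trans_subset (hsub e hde.right_mem)⟩

variable [DecidableEq β] {Q S : Finset β}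

theorem IsAtomIn.subset_of_inter_nonempty (hinter : ∀ A ∈ L, ∀ B ∈ L, A ∩ B ∈ L)
    (hP : IsAtomIn L P) (hS : S ∈ L) (hPS : (P ∩ S).Nonempty) : P ⊆ S := by
  rcases hP.eq_or_eq (hinter P hP.right_mem S hS) (empty_subset _) inter_subset_left with h | h
  · exact absurd h hPS.ne_empty
  · exact inter_eq_left.mp h

theorem subset_image_iff_image_subset_of_involutive {f : β → β} (hf : Function.Involutive f) :
    P ⊆ Q.image f ↔ P.image f ⊆ Q := by
  constructor <;> intro h
  · simpa only [image_image, hf.comp_self, image_id] using image_subset_image (f := f) h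
  · simpa only [image_image, hf.comp_self, image_id] using image_subset_image (f := f) h

end

namespace IsCnLattice

variable {β : Type*} [DecidableEq β] {star : β → β} {E : Finset β} {L : Set (Finset β)}
  {P Q R : Finset β}

theorem exists_isAtomIn_mem (h : IsCnLattice star E L) (h0 : ¬ CovIn L ∅ E) {x : β}
    (hx : x ∈ E) : ∃ P, IsAtomIn L P ∧ x ∈ P :=
  (h.covers_union ∅ h.empty_mem h0 x).mp (by simpa using hx)

theorem inter_eq_empty_of_isAtomIn (h : IsCnLattice star E L) (h0 : ¬ CovIn L ∅ E)
    (hP : IsAtomIn L P) (hQ : IsAtomIn L Q) (hPQ : P ≠ Q) : P ∩ Q = ∅ :=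
  h.covers_inter ∅ h.empty_mem h0 P Q hP hQ hPQ

/-- A cover of `R` through a point of `P \ R*` would lie between `P` and `E`. -/
theorem subset_image_star_of_covIn_ground (h : IsCnLattice star E L) (hP : IsAtomIn L P)
    (hPE : CovIn L P E) (hR : IsAtomIn L R) (hRE : ¬ CovIn L R E) :
    P ⊆ R.image star := by
  intro p hp
  by_contra hpR
  obtain ⟨D, hD, hpD⟩ := (h.covers_union R hR.right_mem hRE p).mp
    (mem_sdiff.mpr ⟨h.subset_ground P hP.right_mem hp, hpR⟩)
  have hPD : P ⊆ D :=
    hP.subset_of_inter_nonempty h.inter_mem hD.right_mem ⟨p, mem_inter.mpr ⟨hp, hpD⟩⟩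
  rcases hPE.eq_or_eq hD.right_mem hPD (h.subset_ground D hD.right_mem) with hDP | hDE
  · exact not_covIn_of_ssubset_of_ssubset hR.right_mem hR.ssubset (hDP ▸ hD.ssubset) hP
  · exact hRE (hDE ▸ hD)

/-- Otherwise `P` would lie in `b*` and in `Q*` for two distinct atoms `b` and `Q` below `d`. -/
theorem not_covIn_ground_of_isAtomIn (h : IsCnLattice star E L) {b d : Finset β}
    (hb : IsAtomIn L b) (hbd : CovIn L b d) (hdE : d ⊂ E) (hP : IsAtomIn L P) :
    ¬ CovIn L P E := by
  intro hPE
  have h0 : ¬ CovIn L ∅ E :=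
    not_covIn_of_ssubset_of_ssubset hb.right_mem hb.ssubset (hbd.ssubset.trans hdE)
  obtain ⟨q, hqd, hqb⟩ := exists_of_ssubset hbd.ssubset
  obtain ⟨Q, hQ, hqQ⟩ := h.exists_isAtomIn_mem h0 (h.subset_ground d hbd.right_mem hqd)
  have hQd : Q ⊆ d :=
    hQ.subset_of_inter_nonempty h.inter_mem hbd.right_mem ⟨q, mem_inter.mpr ⟨hqQ, hqd⟩⟩
  have hQb : Q ≠ b := fun hQb => hqb (hQb ▸ hqQ)
  have hQd' : Q ⊂ d := hQd.ssubset_of_ne fun hQd => not_covIn_of_ssubset_of_ssubset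
    hb.right_mem hb.ssubset (hQd ▸ hbd.ssubset) hQ
  have hbE : ¬ CovIn L b E := not_covIn_of_ssubset_of_ssubset hbd.right_mem hbd.ssubset hdE
  have hQE : ¬ CovIn L Q E := not_covIn_of_ssubset_of_ssubset hbd.right_mem hQd' hdE
  have hPb : P ⊆ b.image star := h.subset_image_star_of_covIn_ground hP hPE hb hbE
  have hPQ : P ⊆ Q.image star := h.subset_image_star_of_covIn_ground hP hPE hQ hQE
  rw [subset_image_iff_image_subset_of_involutive h.star_invol] at hPb hPQ
  obtain ⟨p, hp⟩ := hP.nonempty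
  have hpbQ : star p ∈ Q ∩ b := mem_inter.mpr ⟨hPQ (mem_image_of_mem star hp),
    hPb (mem_image_of_mem star hp)⟩
  rw [h.inter_eq_empty_of_isAtomIn h0 hQ hb hQb] at hpbQ
  exact notMem_empty _ hpbQ

/-- A cover of `P` through a point of `Q \ P*` would contain `Q` and hence a point of `P*`,
contradicting its admissibility. -/
theorem subset_image_star_of_inter_nonempty (h : IsCnLattice star E L) (hP : P ∈ L)
    (hPE : ¬ CovIn L P E) (hQ : IsAtomIn L Q) (hQP : (Q ∩ P.image star).Nonempty) :
    Q ⊆ P.image star := by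
  obtain ⟨q, hq⟩ := hQP
  intro y hy
  by_contra hyP
  obtain ⟨D, hD, hyD⟩ := (h.covers_union P hP hPE y).mp
    (mem_sdiff.mpr ⟨h.subset_ground Q hQ.right_mem hy, hyP⟩)
  have hQD : Q ⊆ D :=
    hQ.subset_of_inter_nonempty h.inter_mem hD.right_mem ⟨y, mem_inter.mpr ⟨hy, hyD⟩⟩
  have hqD : q ∈ D ∩ D.image star := mem_inter.mpr
    ⟨hQD (mem_inter.mp hq).1, image_subset_image hD.ssubset.subset (mem_inter.mp hq).2⟩
  rw [h.admissible D hD.right_mem fun hDE => hPE (hDE ▸ hD)] at hqD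
  exact notMem_empty q hqD

end IsCnLattice

/-- If `A` is an atom of a `C_n` lattice of rank at least `3`
(i.e. some maximal chain from `∅` to the top `E` has at least three cover steps),
then `A*` is also an atom. -/
theorem cn_star_atom (star : α → α) (E : Finset α) (L : Set (Finset α))
    (h : IsCnLattice star E L)
    (hrank : ∃ c : List (Finset α), IsMaxChainIn L ∅ E c ∧ 4 ≤ c.length)
    (A : Finset α) (hA : IsAtomIn L A) :
    IsAtomIn L (A.image star) := by
  obtain ⟨c, hc, hlen⟩ := hrank
  obtain ⟨b, d, hb, hbd, hdE⟩ := hc.exists_isAtomIn_covIn_ssubset h.subset_ground hlen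
  have h0 : ¬ CovIn L ∅ E :=
    not_covIn_of_ssubset_of_ssubset hb.right_mem hb.ssubset (hbd.ssubset.trans hdE)
  have hcoatom : ∀ P, IsAtomIn L P → ¬ CovIn L P E :=
    fun P hP => h.not_covIn_ground_of_isAtomIn hb hbd hdE hP
  have hstar : ∀ {P Q : Finset α}, P ⊆ Q.image star ↔ P.image star ⊆ Q :=
    subset_image_iff_image_subset_of_involutive h.star_invol
  obtain ⟨a, ha⟩ := hA.nonempty
  obtain ⟨B, hB, haB⟩ :=
    h.exists_isAtomIn_mem h0 (h.star_mem a (h.subset_ground A hA.right_mem ha))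
  have hBA : B ⊆ A.image star := h.subset_image_star_of_inter_nonempty hA.right_mem
    (hcoatom A hA) hB ⟨star a, mem_inter.mpr ⟨haB, mem_image_of_mem star ha⟩⟩
  obtain ⟨x, hx⟩ := hB.nonempty
  have hAB : A ⊆ B.image star := h.subset_image_star_of_inter_nonempty hB.right_mem
    (hcoatom B hB) hA ⟨star x, mem_inter.mpr
      ⟨(hstar.mp hBA) (mem_image_of_mem star hx), mem_image_of_mem star hx⟩⟩
  rwa [subset_antisymm (hstar.mp hAB) hBA]
end

section
/- In a finite, bounded, atomistic, graded lattice 𝓛, for every element X the rank of X equals the maximum size of an independent set of atoms whose join is X. -/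
/-! If `ω` is a strict total order and `B` is NBB for `ω`, removing the `ω`-least atom `a` of `B`
strictly lowers the join, since otherwise `B \ {a}` would be bounded below by `a`; by induction
`|B| ≤ rank (⋁ B)`. Conversely, along a maximal chain `⊥ ⋖ X₁ ⋖ ⋯ ⋖ X` each cover `Y ⋖ Z` is
reached by adjoining an atom `a ≤ Z` with `a ≰ Y`, and making `a` least in the order keeps the set
NBB, so `X` is spanned by an independent set of `rank X` atoms. -/

variable {L : Type*} [Lattice L] [BoundedOrder L] [Fintype L] [DecidableEq L]

/-- The set `D` of atoms is bounded below (BB) with respect to the strict order `ω`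
on the atoms: `D` is nonempty and some atom `a` is a strict `ω`-lower bound of every
element of `D` with `a ≤ ⋁ D`. -/
def BddBel (ω : {a : L // IsAtom a} → {a : L // IsAtom a} → Prop)
    (D : Finset {a : L // IsAtom a}) : Prop :=
  D.Nonempty ∧ ∃ a : {a : L // IsAtom a}, (∀ d ∈ D, ω a d) ∧
    (a : L) ≤ D.sup (Subtype.val)

/-- `B` is NBB with respect to `ω` if it contains no bounded below subset. -/
def IsNBB (ω : {a : L // IsAtom a} → {a : L // IsAtom a} → Prop)
    (B : Finset {a : L // IsAtom a}) : Prop :=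
  ∀ D ⊆ B, ¬ BddBel ω D

/-- A set of atoms is independent if it is NBB for some linear (strict total) order
on the atoms. -/
def IndepSet (B : Finset {a : L // IsAtom a}) : Prop :=
  ∃ ω : {a : L // IsAtom a} → {a : L // IsAtom a} → Prop,
    IsStrictTotalOrder _ ω ∧ IsNBB ω B

/-- `r` is the rank function of the graded lattice `L`. -/
def IsRankFn (r : L → ℕ) : Prop :=
  r ⊥ = 0 ∧ ∀ a b : L, a ⋖ b → r b = r a + 1

/-- `L` is atomistic: every element is a join of atoms. -/
def AtomisticL (L : Type*) [Lattice L] [BoundedOrder L] [DecidableEq L] : Prop :=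
  ∀ x : L, ∃ S : Finset {a : L // IsAtom a}, x = S.sup Subtype.val

section StrictTotalOrder

variable {α : Type*} {ω : α → α → Prop}

lemma Finset.exists_least_of_isStrictTotalOrder [IsStrictTotalOrder α ω] {B : Finset α}
    (hB : B.Nonempty) : ∃ a ∈ B, ∀ d ∈ B, d ≠ a → ω a d := by
  let := partialOrderOfSO ω
  obtain ⟨a, hmin⟩ := B.finite_toSet.exists_minimal hB
  refine ⟨a, hmin.prop, fun d hd hda => ?_⟩
  rcases trichotomous_of ω a d with h | rfl | h
  · exact h
  · exact absurd rfl hda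
  · exact absurd h (hmin.not_lt hd)

def moveToBot (ω : α → α → Prop) (a x y : α) : Prop :=
  y ≠ a ∧ (x = a ∨ ω x y)

instance [IsStrictTotalOrder α ω] (a : α) : IsStrictTotalOrder α (moveToBot ω a) where
  irrefl x := fun ⟨hxa, h⟩ => h.elim hxa (irrefl x)
  trans x y z := by
    rintro ⟨hya, rfl | hxy⟩ ⟨hza, hy | hyz⟩
    · exact ⟨hza, .inl rfl⟩
    · exact ⟨hza, .inl rfl⟩
    · exact absurd hy hya
    · exact ⟨hza, .inr (_root_.trans hxy hyz)⟩
  trichotomous x y hxy hyx := by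
    by_cases hx : x = a <;> by_cases hy : y = a
    · exact hx.trans hy.symm
    · exact absurd ⟨hy, .inl hx⟩ hxy
    · exact absurd ⟨hx, .inl hy⟩ hyx
    · exact Std.Trichotomous.trichotomous x y (fun h => hxy ⟨hy, .inr h⟩)
        (fun h => hyx ⟨hx, .inr h⟩)

end StrictTotalOrder

section Atoms

variable {α : Type*} [Lattice α] [BoundedOrder α]
  {ω : {a : α // IsAtom a} → {a : α // IsAtom a} → Prop} {B : Finset {a : α // IsAtom a}}

lemma IsNBB.mono {C : Finset {a : α // IsAtom a}} (hB : IsNBB ω B) (hCB : C ⊆ B) :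
    IsNBB ω C :=
  fun D hD => hB D (hD.trans hCB)

lemma isNBB_empty : IsNBB ω (∅ : Finset {a : α // IsAtom a}) :=
  fun _ hD hBB => hBB.1.ne_empty (Finset.subset_empty.mp hD)

-- A BB subset of `insert a B` cannot contain `a`, which is least for `moveToBot ω a`, and cannot
-- have `a` as its lower bound, since `a` is not below `⋁ B`.
lemma IsNBB.insert_moveToBot [DecidableEq α] {a : {a : α // IsAtom a}} (hB : IsNBB ω B)
    (ha : ¬ (a : α) ≤ B.sup Subtype.val) : IsNBB (moveToBot ω a) (insert a B) := by
  rintro D hD ⟨hne, c, hc, hcD⟩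
  have haD : a ∉ D := fun h => (hc a h).1 rfl
  have hDB : D ⊆ B := fun d hd =>
    (Finset.mem_insert.mp (hD hd)).resolve_left (ne_of_mem_of_not_mem hd haD)
  have hca : c ≠ a := by
    rintro rfl
    exact ha (hcD.trans (Finset.sup_mono hDB))
  exact hB D hDB ⟨hne, c, fun d hd => (hc d hd).2.resolve_left hca, hcD⟩

lemma IsNBB.not_le_sup_erase [DecidableEq α] {a : {a : α // IsAtom a}} (hB : IsNBB ω B)
    (hleast : ∀ d ∈ B, d ≠ a → ω a d) : ¬ (a : α) ≤ (B.erase a).sup Subtype.val := by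
  intro hle
  rcases (B.erase a).eq_empty_or_nonempty with hempty | hne
  · rw [hempty, Finset.sup_empty] at hle
    exact a.2.1 (le_bot_iff.mp hle)
  · exact hB _ (B.erase_subset a) ⟨hne, a, fun d hd =>
      hleast d (Finset.mem_of_mem_erase hd) (Finset.ne_of_mem_erase hd), hle⟩

theorem IsNBB.card_le_of_strictMono [IsStrictTotalOrder _ ω] {r : α → ℕ} (hr : StrictMono r)
    (hB : IsNBB ω B) : B.card ≤ r (B.sup Subtype.val) := by
  classical
  induction B using Finset.strongInduction with
  | H B ih =>
    rcases B.eq_empty_or_nonempty with rfl | hne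
    · simp
    obtain ⟨a, ha, hleast⟩ := Finset.exists_least_of_isStrictTotalOrder (ω := ω) hne
    have hlt : (B.erase a).sup Subtype.val < B.sup Subtype.val :=
      calc (B.erase a).sup Subtype.val < (a : α) ⊔ (B.erase a).sup Subtype.val :=
            right_lt_sup.mpr (hB.not_le_sup_erase hleast)
        _ = B.sup Subtype.val := by rw [← Finset.sup_insert, Finset.insert_erase ha]
    calc B.card = (B.erase a).card + 1 := (Finset.card_erase_add_one ha).symm
      _ ≤ r ((B.erase a).sup Subtype.val) + 1 := by
          gcongr
          exact ih _ (Finset.erase_ssubset ha) (hB.mono (B.erase_subset a))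
      _ ≤ r (B.sup Subtype.val) := hr hlt

lemma IsRankFn.strictMono [Finite α] {r : α → ℕ} (hr : IsRankFn r) : StrictMono r := by
  classical
  have := Fintype.ofFinite α
  let := Fintype.toLocallyFiniteOrder (α := α)
  exact (strictMono_iff_forall_covBy r).2 fun a b h => (hr.2 a b h).symm ▸ Nat.lt_succ_self _

lemma AtomisticL.exists_atom_le_not_le [DecidableEq α] (hatom : AtomisticL α) {X Y : α}
    (h : ¬ X ≤ Y) : ∃ a : {a : α // IsAtom a}, (a : α) ≤ X ∧ ¬ (a : α) ≤ Y := by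
  obtain ⟨S, rfl⟩ := hatom X
  simp only [Finset.sup_le_iff, not_forall] at h
  obtain ⟨a, ha, haY⟩ := h
  exact ⟨a, Finset.le_sup ha, haY⟩

theorem exists_indepSet_card_eq_rank [Finite α] [DecidableEq α] (hatom : AtomisticL α)
    {r : α → ℕ} (hr : IsRankFn r) (X : α) :
    ∃ I : Finset {a : α // IsAtom a}, IndepSet I ∧ I.sup Subtype.val = X ∧ I.card = r X := by
  induction X using WellFoundedLT.induction with
  | _ X ih =>
    rcases eq_or_ne X ⊥ with rfl | hX
    · exact ⟨∅, ⟨WellOrderingRel, inferInstance, isNBB_empty⟩, Finset.sup_empty, hr.1.symm⟩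
    obtain ⟨Y, -, hYX⟩ := exists_le_covBy_of_lt (bot_lt_iff_ne_bot.mpr hX)
    obtain ⟨a, haX, haY⟩ := hatom.exists_atom_le_not_le hYX.lt.not_ge
    obtain ⟨I, ⟨ω, hω, hI⟩, rfl, hcard⟩ := ih _ hYX.lt
    have hsup : I.sup Subtype.val ⊔ a = X :=
      (hYX.eq_or_eq le_sup_left (sup_le hYX.le haX)).resolve_left
        fun h => haY (h ▸ le_sup_right)
    refine ⟨insert a I, ⟨moveToBot ω a, inferInstance, hI.insert_moveToBot haY⟩, ?_, ?_⟩
    · rw [Finset.sup_insert, sup_comm, hsup]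
    · rw [Finset.card_insert_of_notMem fun h => haY (Finset.le_sup h), hcard, hr.2 _ _ hYX]

end Atoms

/-- In a finite, bounded, atomistic, graded lattice, for every
element `X` the rank of `X` is the maximum size of an independent set of atoms
whose join is `X`. -/
theorem rank_eq_max_indep (r : L → ℕ) (hr : IsRankFn r) (hatom : AtomisticL L)
    (X : L) :
    IsGreatest {n : ℕ | ∃ I : Finset {a : L // IsAtom a},
      IndepSet I ∧ I.sup Subtype.val = X ∧ I.card = n} (r X) := by
  refine ⟨exists_indepSet_card_eq_rank hatom hr X, ?_⟩
  rintro _ ⟨I, ⟨ω, hω, hI⟩, rfl, rfl⟩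
  exact hI.card_le_of_strictMono hr.strictMono
end
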